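/- Suppose 0 < β < 1/(N+1). A vector t = (t_0, t_1, …, t_m) ∈ ℝ^{m+1} with 0 = t_0 < t_1 < … < t_m is an admissible translation vector if and only if t ∈ T^{m+1} and there exist finite sets I_1 ⊂ ⋃_{n≥τ_t} Ω_t^n and I_2 ⊂ ⋃_{n≥τ_t} Ω̂_t^n of words such that ⋃_{i∈I_1} φ_i(Γ_t) ∪ ⋃_{i∈I_2} φ_i(1 − Γ_t) = Γ. -/

import Mathlib

noncomputable section

namespace HSCantor

/-- A `D`-coding of `x`: a digit sequence `c` with digits in `D ⊆ ℤ` such that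
`x = (1-β)/N · Σ_{k=1}^∞ c_k β^{k-1}` (here indexed from `k = 0`). -/
def IsCoding (N : ℕ) (β : ℝ) (D : Set ℤ) (x : ℝ) (c : ℕ → ℤ) : Prop :=
  (∀ k, c k ∈ D) ∧ x = (1 - β) / N * ∑' k : ℕ, (c k : ℝ) * β ^ k

/-- The set `Γ_{β,D}` for a digit set `D ⊆ ℤ`. -/
def cantorD (N : ℕ) (β : ℝ) (D : Set ℤ) : Set ℝ := { x | ∃ c, IsCoding N β D x c }

/-- The homogeneous symmetric Cantor set `Γ = Γ_{β,{0,1,…,N}}`. -/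
def Gamma (N : ℕ) (β : ℝ) : Set ℝ := cantorD N β (Set.Icc 0 (N : ℤ))

/-- `E ⊆ ℝ` is a self-similar set: it is nonempty, compact, and is the union of its
images under finitely many contracting similitudes `x ↦ r x + b`, `0 < |r| < 1`. -/
def IsSelfSimilar (E : Set ℝ) : Prop :=
  E.Nonempty ∧ IsCompact E ∧ ∃ F : Finset (ℝ × ℝ),
    (∀ p ∈ F, 0 < |p.1| ∧ |p.1| < 1) ∧
    E = ⋃ p ∈ F, (fun x => p.1 * x + p.2) '' E

/-- `Γ_t = ⋃_{j=0}^m (Γ + t_j)`. -/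
def GammaT (N : ℕ) (β : ℝ) {m : ℕ} (t : Fin (m + 1) → ℝ) : Set ℝ :=
  ⋃ j, (fun x => x + t j) '' Gamma N β

/-- The set `T = ⋃_{n≥1} { (1-β)/N · Σ_{k=1}^n j_k β^{-k} : j_k ∈ {0,…,N} }`. -/
def Tset (N : ℕ) (β : ℝ) : Set ℝ :=
  { x | ∃ n : ℕ, 1 ≤ n ∧ ∃ c : ℕ → ℕ, (∀ k, c k ≤ N) ∧
      x = (1 - β) / N * ∑ k ∈ Finset.Icc 1 n, (c k : ℝ) * β ^ (-(k : ℤ)) }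

/-- `d` is a digit representation of the translation vector `t` with `τ` digits:
`t_j = (1-β)/N · Σ_{k=1}^τ d_{j,k} β^{-k}` with all digits in `{0,…,N}`. -/
def IsDigitRep (N : ℕ) (β : ℝ) {m : ℕ} (t : Fin (m + 1) → ℝ) (τ : ℕ)
    (d : Fin (m + 1) → ℕ → ℕ) : Prop :=
  (∀ j k, d j k ≤ N) ∧
    ∀ j, t j = (1 - β) / N * ∑ k ∈ Finset.Icc 1 τ, (d j k : ℝ) * β ^ (-(k : ℤ))

/-- `d` is a digit representation of `t` with `τ = τ_t` digits, `τ_t` minimal. -/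
def IsMinimalRep (N : ℕ) (β : ℝ) {m : ℕ} (t : Fin (m + 1) → ℝ) (τ : ℕ)
    (d : Fin (m + 1) → ℕ → ℕ) : Prop :=
  IsDigitRep N β t τ d ∧ ∀ τ' < τ, ∀ d', ¬ IsDigitRep N β t τ' d'

/-- `s_k = max_{0 ≤ j ≤ m} t_{j,k}`. -/
def digitSup {m : ℕ} (d : Fin (m + 1) → ℕ → ℕ) (k : ℕ) : ℕ :=
  Finset.univ.sup fun j => d j k

/-- Words of length `n` over the alphabet `{0,1,…,N}`, as lists of naturals. -/
def Words (N n : ℕ) : Set (List ℕ) := { w | w.length = n ∧ ∀ x ∈ w, x ≤ N }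

/-- `Ω_t^n`: words `i_1 … i_n ∈ {0,…,N}^n` with `i_{n+1-k} ≤ N - s_k` for `1 ≤ k ≤ τ`.
(A list `w = [i_1, …, i_n]` satisfies `i_{n+1-k} = w.getD (n-k) 0`.) -/
def Omega (N τ : ℕ) (s : ℕ → ℕ) (n : ℕ) : Set (List ℕ) :=
  { w | w ∈ Words N n ∧ ∀ k, 1 ≤ k → k ≤ τ → w.getD (n - k) 0 + s k ≤ N }

/-- `Ω̂_t^n`: words `i_1 … i_n ∈ {0,…,N}^n` with `i_{n+1-k} ≥ s_k` for `1 ≤ k ≤ τ`. -/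
def OmegaHat (N τ : ℕ) (s : ℕ → ℕ) (n : ℕ) : Set (List ℕ) :=
  { w | w ∈ Words N n ∧ ∀ k, 1 ≤ k → k ≤ τ → s k ≤ w.getD (n - k) 0 }

/-- `W_t^τ = A_t^τ ∪ Â_t^τ`: words obtained from a word in `Ω_t^τ` (resp. `Ω̂_t^τ`)
by adding (resp. subtracting) the digits of some `t_j` to the last `τ` positions. -/
def Wset (N : ℕ) {m : ℕ} (τ : ℕ) (d : Fin (m + 1) → ℕ → ℕ) : Set (List ℕ) :=
  { v | ∃ w ∈ Omega N τ (digitSup d) τ, ∃ j : Fin (m + 1),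
      v = List.ofFn fun idx : Fin τ => w.getD idx 0 + d j (τ - (idx : ℕ)) } ∪
  { v | ∃ w ∈ OmegaHat N τ (digitSup d) τ, ∃ j : Fin (m + 1),
      v = List.ofFn fun idx : Fin τ => w.getD idx 0 - d j (τ - (idx : ℕ)) }

/-- The symbolic admissibility condition:
`⋃_{n=τ}^ℓ {0,…,N}^{n-τ} × W_t^τ × {0,…,N}^{ℓ-n} = {0,…,N}^ℓ` for some `ℓ ≥ τ`. -/
def AdmissibleWith (N : ℕ) {m : ℕ} (τ : ℕ) (d : Fin (m + 1) → ℕ → ℕ) : Prop :=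
  ∃ ℓ, τ ≤ ℓ ∧
    (⋃ n ∈ Finset.Icc τ ℓ,
      { z : List ℕ | ∃ u ∈ Words N (n - τ), ∃ w ∈ Wset N τ d, ∃ v ∈ Words N (ℓ - n),
          z = u ++ w ++ v }) = Words N ℓ

/-- `t` is an admissible translation vector. -/
def IsAdmissible (N : ℕ) (β : ℝ) {m : ℕ} (t : Fin (m + 1) → ℝ) : Prop :=
  (∀ j, t j ∈ Tset N β) ∧
    ∃ τ d, IsMinimalRep N β t τ d ∧ AdmissibleWith N τ d

/-- The vertex set `V_t = {0,…,N}^τ \ W_t^τ` of the directed graph `G_t`. -/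
def Vset (N : ℕ) {m : ℕ} (τ : ℕ) (d : Fin (m + 1) → ℕ → ℕ) : Set (List ℕ) :=
  Words N τ \ Wset N τ d

/-- The graph on `V` with an edge `i → j` iff `i_2 … i_τ = j_1 … j_{τ-1}` has a cycle:
a directed path of positive length starting and ending at the same vertex. -/
def HasCycle (V : Set (List ℕ)) : Prop :=
  ∃ (L : ℕ) (p : ℕ → List ℕ), 0 < L ∧ (∀ i ≤ L, p i ∈ V) ∧
    (∀ i < L, (p i).drop 1 = (p (i + 1)).dropLast) ∧ p 0 = p L

open Classical in
/-- The adjacency matrix of the directed graph `G_t`, indexed by all words of length `τ`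
over `{0,…,N}`; its `(i,j)` entry is `1` exactly when `i, j ∈ V_t` and there is a
directed edge `i → j`, and the rows and columns outside `V_t` are zero. -/
def adjMat (N τ : ℕ) (V : Set (List ℕ)) :
    Matrix (Fin τ → Fin (N + 1)) (Fin τ → Fin (N + 1)) ℕ :=
  fun i j =>
    if (List.ofFn fun k => (i k : ℕ)) ∈ V ∧ (List.ofFn fun k => (j k : ℕ)) ∈ V ∧
        (List.ofFn fun k => (i k : ℕ)).drop 1 = (List.ofFn fun k => (j k : ℕ)).dropLast
    then 1 else 0

/-- `φ_i(x) = βx + i(1-β)/N`. -/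
def phi (N : ℕ) (β : ℝ) (i : ℕ) (x : ℝ) : ℝ := β * x + i * (1 - β) / N

/-- `φ_{i_1 … i_n} = φ_{i_1} ∘ ⋯ ∘ φ_{i_n}`. -/
def phiWord (N : ℕ) (β : ℝ) (w : List ℕ) (x : ℝ) : ℝ := w.foldr (phi N β) x

/-- The conjugate translation vector `t̂_j = t_m - t_{m-j}`. -/
def conj {m : ℕ} (t : Fin (m + 1) → ℝ) : Fin (m + 1) → ℝ :=
  fun j => t (Fin.last m) - t ⟨m - (j : ℕ), Nat.lt_succ_of_le (Nat.sub_le m j)⟩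

section AuxLemmas

variable {N : ℕ} {β : ℝ}

def wordVal (β : ℝ) (w : List ℕ) : ℝ :=
  ∑ p ∈ Finset.range w.length, (w.getD p 0 : ℝ) * β ^ p

lemma phiWord_eq (N : ℕ) (β : ℝ) (w : List ℕ) (x : ℝ) :
    phiWord N β w x = β ^ w.length * x + (1 - β) / N * wordVal β w := by
  induction w with
  | nil => simp [phiWord, wordVal]
  | cons a w ih =>
    have hval : wordVal β (a :: w) = (a : ℝ) + β * wordVal β w := by
      simp only [wordVal, List.length_cons]
      rw [Finset.sum_range_succ']
      have : ∀ p ∈ Finset.range w.length,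
          ((a :: w).getD (p + 1) 0 : ℝ) * β ^ (p + 1) = β * ((w.getD p 0 : ℝ) * β ^ p) := by
        intro p _
        simp [List.getD_cons_succ, pow_succ]
        ring
      rw [Finset.sum_congr rfl this, ← Finset.mul_sum]
      simp [List.getD_cons_zero]
      ring
    have : phiWord N β (a :: w) x = phi N β a (phiWord N β w x) := rfl
    rw [this, ih, hval, phi]
    simp only [List.length_cons]
    ring

lemma phiWord_append (N : ℕ) (β : ℝ) (u v : List ℕ) (x : ℝ) :
    phiWord N β (u ++ v) x = phiWord N β u (phiWord N β v x) := by
  simp [phiWord, List.foldr_append]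

lemma summable_digits (hβ0 : 0 ≤ β) (hβ1 : β < 1) {c : ℕ → ℤ}
    (hc : ∀ k, c k ∈ Set.Icc 0 (N : ℤ)) : Summable fun k => (c k : ℝ) * β ^ k := by
  refine Summable.of_nonneg_of_le (fun k => ?_) (fun k => ?_)
    ((summable_geometric_of_lt_one hβ0 hβ1).mul_left (N : ℝ))
  · have h1 : (0 : ℤ) ≤ c k := (hc k).1
    have : (0 : ℝ) ≤ (c k : ℝ) := by exact_mod_cast h1
    exact mul_nonneg this (pow_nonneg hβ0 k)
  · have h2 : (c k : ℝ) ≤ N := by exact_mod_cast (hc k).2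
    exact mul_le_mul_of_nonneg_right h2 (pow_nonneg hβ0 k)

lemma tsum_tail (hβ0 : 0 ≤ β) (hβ1 : β < 1) {c : ℕ → ℤ}
    (hc : ∀ k, c k ∈ Set.Icc 0 (N : ℤ)) (n : ℕ) :
    ∑' k : ℕ, (c k : ℝ) * β ^ k =
      (∑ p ∈ Finset.range n, (c p : ℝ) * β ^ p) + β ^ n * ∑' k : ℕ, (c (k + n) : ℝ) * β ^ k := by
  have hs := summable_digits (N := N) hβ0 hβ1 hc
  rw [← hs.sum_add_tsum_nat_add n]
  congr 1
  have : ∀ k : ℕ, (c (k + n) : ℝ) * β ^ (k + n) = β ^ n * ((c (k + n) : ℝ) * β ^ k) := by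
    intro k; rw [pow_add]; ring
  rw [tsum_congr this, tsum_mul_left]


lemma words_getD_le {n : ℕ} {w : List ℕ} (hw : w ∈ Words N n) {p : ℕ} (hp : p < n) :
    w.getD p 0 ≤ N := by
  have hl : p < w.length := by rw [hw.1]; exact hp
  rw [List.getD_eq_getElem w 0 hl]
  exact hw.2 _ (List.getElem_mem hl)

lemma coding_phiWord (hβ0 : 0 ≤ β) (hβ1 : β < 1) {n : ℕ} {w : List ℕ} (hw : w ∈ Words N n)
    {x : ℝ} {c : ℕ → ℤ} (hc : IsCoding N β (Set.Icc 0 (N : ℤ)) x c) :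
    IsCoding N β (Set.Icc 0 (N : ℤ)) (phiWord N β w x)
      (fun k => if k < n then (w.getD k 0 : ℤ) else c (k - n)) := by
  constructor
  · intro k
    by_cases hk : k < n
    · simp only [hk, if_true]
      exact ⟨by positivity, by exact_mod_cast words_getD_le hw hk⟩
    · simp only [hk, if_false]; exact hc.1 _
  · have hmem : ∀ k, (if k < n then (w.getD k 0 : ℤ) else c (k - n)) ∈ Set.Icc 0 (N : ℤ) := by
      intro k
      by_cases hk : k < n
      · simp only [hk, if_true]
        exact ⟨by positivity, by exact_mod_cast words_getD_le hw hk⟩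
      · simp only [hk, if_false]; exact hc.1 _
    rw [tsum_tail hβ0 hβ1 hmem n]
    have h1 : ∀ p ∈ Finset.range n,
        (((if p < n then (w.getD p 0 : ℤ) else c (p - n)) : ℤ) : ℝ) * β ^ p
          = (w.getD p 0 : ℝ) * β ^ p := by
      intro p hp
      rw [if_pos (Finset.mem_range.mp hp)]
      norm_num
    have h2 : ∀ k : ℕ, (((if k + n < n then (w.getD (k + n) 0 : ℤ) else c (k + n - n)) : ℤ) : ℝ) * β ^ k
        = (c k : ℝ) * β ^ k := by
      intro k
      rw [if_neg (by omega), Nat.add_sub_cancel]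
    rw [Finset.sum_congr rfl h1, tsum_congr h2, phiWord_eq, hc.2, hw.1]
    unfold wordVal
    rw [hw.1]
    ring

lemma coding_unique (hN : 0 < N) (hβ0 : 0 < β) (hbig : β * (N + 1) < 1)
    {x : ℝ} {c c' : ℕ → ℤ} (h : IsCoding N β (Set.Icc 0 (N : ℤ)) x c)
    (h' : IsCoding N β (Set.Icc 0 (N : ℤ)) x c') : ∀ k, c k = c' k := by
  have hNN : (0:ℝ) ≤ N := Nat.cast_nonneg N
  have hb1 : β < 1 := by nlinarith
  have hβ0' : (0 : ℝ) ≤ β := le_of_lt hβ0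
  have hNR : (0 : ℝ) < N := by exact_mod_cast hN
  have hK : (1 - β) / N ≠ 0 := ne_of_gt (div_pos (by linarith) hNR)
  have hS : ∑' k : ℕ, (c k : ℝ) * β ^ k = ∑' k : ℕ, (c' k : ℝ) * β ^ k :=
    mul_left_cancel₀ hK (h.2.symm.trans h'.2)
  intro n
  induction n using Nat.strong_induction_on with
  | _ n ih =>
    have htail : ∑' k : ℕ, (c (k + n) : ℝ) * β ^ k = ∑' k : ℕ, (c' (k + n) : ℝ) * β ^ k := by
      have t1 := tsum_tail (N := N) hβ0' hb1 h.1 n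
      have t2 := tsum_tail (N := N) hβ0' hb1 h'.1 n
      have hpre : (∑ p ∈ Finset.range n, (c p : ℝ) * β ^ p)
          = ∑ p ∈ Finset.range n, (c' p : ℝ) * β ^ p := by
        refine Finset.sum_congr rfl fun p hp => ?_
        rw [ih p (Finset.mem_range.mp hp)]
      have hpβ : (0:ℝ) < β ^ n := pow_pos hβ0 n
      have := hS
      rw [t1, t2, hpre] at this
      have h3 : β ^ n * ∑' k : ℕ, (c (k + n) : ℝ) * β ^ k
          = β ^ n * ∑' k : ℕ, (c' (k + n) : ℝ) * β ^ k := by linarith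
      exact mul_left_cancel₀ (ne_of_gt hpβ) h3
    -- peel off first term
    have hs1 : Summable fun k => (c (k + n) : ℝ) * β ^ k :=
      summable_digits hβ0' hb1 (fun k => h.1 _)
    have hs2 : Summable fun k => (c' (k + n) : ℝ) * β ^ k :=
      summable_digits hβ0' hb1 (fun k => h'.1 _)
    have e1 := tsum_tail (N := N) hβ0' hb1 (fun k => h.1 (k + n)) 1
    have e2 := tsum_tail (N := N) hβ0' hb1 (fun k => h'.1 (k + n)) 1
    simp only [Finset.range_one, Finset.sum_singleton, pow_zero, pow_one, mul_one,
      zero_add] at e1 e2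
    -- e1 : ∑' k, c (k+n) β^k = c n + β * ∑' k, c (k+1+n) β^k
    have hU : Summable fun k => (c (k + 1 + n) : ℝ) * β ^ k :=
      summable_digits hβ0' hb1 (fun k => h.1 _)
    have hU' : Summable fun k => (c' (k + 1 + n) : ℝ) * β ^ k :=
      summable_digits hβ0' hb1 (fun k => h'.1 _)
    have hdiff : ((c n : ℝ) - c' n) = β * (∑' k : ℕ, (c' (k + 1 + n) : ℝ) * β ^ k
        - ∑' k : ℕ, (c (k + 1 + n) : ℝ) * β ^ k) := by
      rw [mul_sub]
      rw [e1, e2] at htail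
      linarith
    have hbound : |∑' k : ℕ, (c' (k + 1 + n) : ℝ) * β ^ k
        - ∑' k : ℕ, (c (k + 1 + n) : ℝ) * β ^ k| ≤ (N : ℝ) * (1 - β)⁻¹ := by
      rw [← Summable.tsum_sub hU' hU]
      have hsn : Summable fun k : ℕ => ‖(c' (k + 1 + n) : ℝ) * β ^ k - (c (k + 1 + n) : ℝ) * β ^ k‖ := by
        apply Summable.of_nonneg_of_le (fun k => norm_nonneg _)
          (fun k => ?_) ((summable_geometric_of_lt_one hβ0' hb1).mul_left (N : ℝ))
        rw [← sub_mul]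
        rw [norm_mul]
        have hd : ‖((c' (k + 1 + n) : ℝ) - c (k + 1 + n))‖ ≤ (N : ℝ) := by
          rw [Real.norm_eq_abs, abs_sub_le_iff]
          have a1 := (h.1 (k + 1 + n)).1
          have a2 := (h.1 (k + 1 + n)).2
          have a3 := (h'.1 (k + 1 + n)).1
          have a4 := (h'.1 (k + 1 + n)).2
          constructor
          · have : (c' (k+1+n) : ℝ) ≤ N := by exact_mod_cast a4
            have h0 : (0:ℝ) ≤ (c (k+1+n) : ℝ) := by exact_mod_cast a1
            linarith
          · have : (c (k+1+n) : ℝ) ≤ N := by exact_mod_cast a2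
            have h0 : (0:ℝ) ≤ (c' (k+1+n) : ℝ) := by exact_mod_cast a3
            linarith
        calc ‖((c' (k + 1 + n) : ℝ) - c (k + 1 + n))‖ * ‖β ^ k‖
            ≤ (N : ℝ) * ‖β ^ k‖ := by
              exact mul_le_mul_of_nonneg_right hd (norm_nonneg _)
          _ = (N : ℝ) * β ^ k := by
              rw [Real.norm_eq_abs, abs_pow, abs_of_nonneg hβ0']
      calc |∑' k : ℕ, ((c' (k + 1 + n) : ℝ) * β ^ k - (c (k + 1 + n) : ℝ) * β ^ k)|
          ≤ ∑' k : ℕ, ‖(c' (k + 1 + n) : ℝ) * β ^ k - (c (k + 1 + n) : ℝ) * β ^ k‖ :=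
            norm_tsum_le_tsum_norm hsn
        _ ≤ ∑' k : ℕ, (N : ℝ) * β ^ k := by
            refine Summable.tsum_le_tsum (fun k => ?_) hsn
              ((summable_geometric_of_lt_one hβ0' hb1).mul_left (N : ℝ))
            rw [← sub_mul, norm_mul, Real.norm_eq_abs (β ^ k), abs_pow, abs_of_nonneg hβ0']
            refine mul_le_mul_of_nonneg_right ?_ (pow_nonneg hβ0' k)
            rw [Real.norm_eq_abs, abs_sub_le_iff]
            have a1 := (h.1 (k + 1 + n)).1
            have a2 := (h.1 (k + 1 + n)).2
            have a3 := (h'.1 (k + 1 + n)).1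
            have a4 := (h'.1 (k + 1 + n)).2
            constructor
            · have : (c' (k+1+n) : ℝ) ≤ N := by exact_mod_cast a4
              have h0 : (0:ℝ) ≤ (c (k+1+n) : ℝ) := by exact_mod_cast a1
              linarith
            · have : (c (k+1+n) : ℝ) ≤ N := by exact_mod_cast a2
              have h0 : (0:ℝ) ≤ (c' (k+1+n) : ℝ) := by exact_mod_cast a3
              linarith
        _ = (N : ℝ) * (1 - β)⁻¹ := by
            rw [tsum_mul_left, tsum_geometric_of_lt_one hβ0' hb1]
    have habs : |(c n : ℝ) - c' n| < 1 := by
      rw [hdiff, abs_mul, abs_of_nonneg hβ0']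
      have h1β : (0:ℝ) < 1 - β := by linarith
      calc β * |∑' k : ℕ, (c' (k + 1 + n) : ℝ) * β ^ k - ∑' k : ℕ, (c (k + 1 + n) : ℝ) * β ^ k|
          ≤ β * ((N : ℝ) * (1 - β)⁻¹) := by
            exact mul_le_mul_of_nonneg_left hbound hβ0'
        _ < 1 := by
            have heq : β * ((N : ℝ) * (1 - β)⁻¹) = (β * N) / (1 - β) := by field_simp
            rw [heq, div_lt_one h1β]
            nlinarith
    have hlt : |c n - c' n| < 1 := by
      have : |((c n - c' n : ℤ) : ℝ)| < 1 := by push_cast; exact habs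
      exact_mod_cast this
    rw [abs_lt] at hlt
    omega


lemma zero_mem_gamma : (0 : ℝ) ∈ Gamma N β := by
  refine ⟨fun _ => 0, fun k => ?_, by simp⟩
  simp [Set.mem_Icc]

lemma gamma_phiWord (hβ0 : 0 ≤ β) (hβ1 : β < 1) {n : ℕ} {w : List ℕ} (hw : w ∈ Words N n)
    {x : ℝ} (hx : x ∈ Gamma N β) : phiWord N β w x ∈ Gamma N β := by
  obtain ⟨c, hc⟩ := hx
  exact ⟨_, coding_phiWord hβ0 hβ1 hw hc⟩

lemma gamma_one_sub (hN : 0 < N) (hβ0 : 0 ≤ β) (hβ1 : β < 1)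
    {x : ℝ} (hx : x ∈ Gamma N β) : 1 - x ∈ Gamma N β := by
  obtain ⟨c, hc⟩ := hx
  refine ⟨fun k => N - c k, fun k => ?_, ?_⟩
  · have h1 := (hc.1 k).1
    have h2 := (hc.1 k).2
    simp only [Set.mem_Icc]
    omega
  · have hsum1 : Summable fun k : ℕ => ((N : ℤ) : ℝ) * β ^ k := by
      exact (summable_geometric_of_lt_one hβ0 hβ1).mul_left _
    have hsum2 := summable_digits (N := N) hβ0 hβ1 hc.1
    have hNR : (0 : ℝ) < N := by exact_mod_cast hN
    have h1 : ∑' k : ℕ, ((N - c k : ℤ) : ℝ) * β ^ k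
        = (N : ℝ) * (1 - β)⁻¹ - ∑' k : ℕ, (c k : ℝ) * β ^ k := by
      have : ∀ k : ℕ, ((N - c k : ℤ) : ℝ) * β ^ k
          = ((N : ℝ) * β ^ k) - ((c k : ℝ) * β ^ k) := by
        intro k; push_cast; ring
      rw [tsum_congr this, Summable.tsum_sub (by exact_mod_cast hsum1) hsum2]
      rw [tsum_mul_left, tsum_geometric_of_lt_one hβ0 hβ1]
    rw [h1, hc.2]
    have hβne : (1 : ℝ) - β ≠ 0 := by intro h; rw [sub_eq_zero] at h; exact absurd h.symm (ne_of_lt hβ1)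
    field_simp

lemma gamma_split (hN : 0 < N) (hβ0 : 0 ≤ β) (hβ1 : β < 1) {x : ℝ} (hx : x ∈ Gamma N β)
    (ℓ : ℕ) : ∃ y g, y ∈ Words N ℓ ∧ g ∈ Gamma N β ∧ x = phiWord N β y g := by
  obtain ⟨c, hc⟩ := hx
  refine ⟨List.ofFn fun k : Fin ℓ => (c k).toNat,
    (1 - β) / N * ∑' k : ℕ, (c (k + ℓ) : ℝ) * β ^ k, ⟨?_, ?_⟩, ⟨fun k => c (k + ℓ),
      fun k => hc.1 _, rfl⟩, ?_⟩
  · simp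
  · intro a ha
    rw [List.mem_ofFn] at ha
    obtain ⟨p, hp⟩ := ha
    change (c (p : ℕ)).toNat = a at hp
    have h1 := (hc.1 (p : ℕ)).2
    omega
  · rw [phiWord_eq, hc.2, tsum_tail hβ0 hβ1 hc.1 ℓ]
    have hlen : (List.ofFn fun k : Fin ℓ => (c k).toNat).length = ℓ := by simp
    have hval : wordVal β (List.ofFn fun k : Fin ℓ => (c k).toNat)
        = ∑ p ∈ Finset.range ℓ, (c p : ℝ) * β ^ p := by
      unfold wordVal
      rw [hlen]
      refine Finset.sum_congr rfl fun p hp => ?_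
      have hpl : p < ℓ := Finset.mem_range.mp hp
      have : (List.ofFn fun k : Fin ℓ => (c k).toNat).getD p 0 = (c p).toNat := by
        rw [List.getD_eq_getElem _ _ (by simpa using hpl), List.getElem_ofFn]
      rw [this]
      congr 1
      have := (hc.1 p).1
      exact_mod_cast congrArg Int.cast (Int.toNat_of_nonneg this)
    rw [hval, hlen]
    ring

lemma prefix_digits_eq (hN : 0 < N) (hβ0 : 0 < β) (hbig : β * (N + 1) < 1)
    {ℓ n : ℕ} (hn : n ≤ ℓ) {y z : List ℕ} (hy : y ∈ Words N ℓ) (hz : z ∈ Words N n)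
    {g g' : ℝ} (hg : g ∈ Gamma N β) (hg' : g' ∈ Gamma N β)
    (heq : phiWord N β y g' = phiWord N β z g) : ∀ p < n, z.getD p 0 = y.getD p 0 := by
  have hNN : (0:ℝ) ≤ N := Nat.cast_nonneg N
  have hb1 : β < 1 := by nlinarith
  obtain ⟨c, hc⟩ := hg
  obtain ⟨c', hc'⟩ := hg'
  have k1 := coding_phiWord hβ0.le hb1 hy hc'
  have k2 := coding_phiWord hβ0.le hb1 hz hc
  rw [heq] at k1
  have := coding_unique hN hβ0 hbig k1 k2
  intro p hp
  have h := this p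
  rw [if_pos (lt_of_lt_of_le hp hn), if_pos hp] at h
  exact_mod_cast h.symm

lemma phiWord_shift (hN : 0 < N) (hβ0 : 0 < β) {n τ : ℕ} (hτn : τ ≤ n) {z I : List ℕ}
    (hz : z.length = n) (hI : I.length = n) (e : ℕ → ℕ) (ε : ℝ)
    (hzd : ∀ p < n, (z.getD p 0 : ℝ)
      = (I.getD p 0 : ℝ) + ε * (if n - τ ≤ p then (e (n - p) : ℝ) else 0))
    (x : ℝ) :
    phiWord N β I (x + ε * ((1 - β) / N * ∑ k ∈ Finset.Icc 1 τ, (e k : ℝ) * β ^ (-(k : ℤ)))) =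
      phiWord N β z x := by
  rw [phiWord_eq, phiWord_eq, hz, hI]
  have hsum : wordVal β z = wordVal β I
      + ε * ∑ k ∈ Finset.Icc 1 τ, (e k : ℝ) * β ^ ((n : ℕ) - k) := by
    unfold wordVal
    rw [hz, hI]
    have step1 : ∑ p ∈ Finset.range n, (z.getD p 0 : ℝ) * β ^ p
        = ∑ p ∈ Finset.range n, ((I.getD p 0 : ℝ) * β ^ p
            + ε * (if n - τ ≤ p then (e (n - p) : ℝ) * β ^ p else 0)) := by
      refine Finset.sum_congr rfl fun p hp => ?_
      rw [hzd p (Finset.mem_range.mp hp)]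
      by_cases hpc : n - τ ≤ p
      · simp only [hpc, if_true]; ring
      · simp only [hpc, if_false]; ring
    rw [step1, Finset.sum_add_distrib, ← Finset.mul_sum]
    congr 1
    congr 1
    rw [Finset.sum_ite, Finset.sum_const_zero, add_zero]
    refine Finset.sum_nbij' (fun p => n - p) (fun k => n - k) ?_ ?_ ?_ ?_ ?_
    · intro p hp
      simp only [Finset.mem_filter, Finset.mem_range] at hp
      simp only [Finset.mem_Icc]
      omega
    · intro k hk
      simp only [Finset.mem_Icc] at hk
      simp only [Finset.mem_filter, Finset.mem_range]
      omega
    · intro p hp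
      simp only [Finset.mem_filter, Finset.mem_range] at hp
      show n - (n - p) = p
      omega
    · intro k hk
      simp only [Finset.mem_Icc] at hk
      show n - (n - k) = k
      omega
    · intro p hp
      simp only [Finset.mem_filter, Finset.mem_range] at hp
      show (e (n - p) : ℝ) * β ^ p = (e (n - p) : ℝ) * β ^ (n - (n - p))
      have hpeq : n - (n - p) = p := by omega
      rw [hpeq]
  have hpow : ∑ k ∈ Finset.Icc 1 τ, (e k : ℝ) * β ^ ((n : ℕ) - k)
      = β ^ n * ∑ k ∈ Finset.Icc 1 τ, (e k : ℝ) * β ^ (-(k : ℤ)) := by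
    rw [Finset.mul_sum]
    refine Finset.sum_congr rfl fun k hk => ?_
    simp only [Finset.mem_Icc] at hk
    rw [pow_sub₀ β (ne_of_gt hβ0) (le_trans hk.2 hτn)]
    rw [zpow_neg, zpow_natCast]
    ring
  rw [hsum, hpow]
  ring


def addWord (τ : ℕ) (e : ℕ → ℕ) (i : List ℕ) : List ℕ :=
  List.ofFn fun p : Fin i.length =>
    i.getD p 0 + (if i.length - τ ≤ (p : ℕ) then e (i.length - (p : ℕ)) else 0)

def subWord (τ : ℕ) (e : ℕ → ℕ) (i : List ℕ) : List ℕ :=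
  List.ofFn fun p : Fin i.length =>
    i.getD p 0 - (if i.length - τ ≤ (p : ℕ) then e (i.length - (p : ℕ)) else 0)

def allWords (N n : ℕ) : Finset (List ℕ) :=
  Finset.univ.image fun f : Fin n → Fin (N + 1) => List.ofFn fun k => (f k : ℕ)

lemma mem_allWords {n : ℕ} {w : List ℕ} : w ∈ allWords N n ↔ w ∈ Words N n := by
  constructor
  · intro hw
    obtain ⟨f, _, rfl⟩ := Finset.mem_image.mp hw
    refine ⟨by simp, ?_⟩
    intro a ha
    rw [List.mem_ofFn] at ha
    obtain ⟨p, hp⟩ := ha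
    change ((f p : ℕ)) = a at hp
    omega
  · intro hw
    refine Finset.mem_image.mpr ⟨fun k => ⟨w.getD k 0, ?_⟩, Finset.mem_univ _, ?_⟩
    · have := words_getD_le hw k.2
      omega
    · refine List.ext_getElem (by simp [hw.1]) fun p h1 h2 => ?_
      rw [List.getElem_ofFn]
      show w.getD p 0 = w[p]
      exact List.getD_eq_getElem w 0 h2

lemma length_addWord {τ : ℕ} {e : ℕ → ℕ} {i : List ℕ} : (addWord τ e i).length = i.length := by
  simp [addWord]

lemma length_subWord {τ : ℕ} {e : ℕ → ℕ} {i : List ℕ} : (subWord τ e i).length = i.length := by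
  simp [subWord]

lemma getD_addWord {τ : ℕ} {e : ℕ → ℕ} {i : List ℕ} {p : ℕ} (hp : p < i.length) :
    (addWord τ e i).getD p 0
      = i.getD p 0 + (if i.length - τ ≤ p then e (i.length - p) else 0) := by
  rw [List.getD_eq_getElem _ 0 (by rw [length_addWord]; exact hp)]
  unfold addWord
  rw [List.getElem_ofFn]

lemma getD_subWord {τ : ℕ} {e : ℕ → ℕ} {i : List ℕ} {p : ℕ} (hp : p < i.length) :
    (subWord τ e i).getD p 0
      = i.getD p 0 - (if i.length - τ ≤ p then e (i.length - p) else 0) := by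
  rw [List.getD_eq_getElem _ 0 (by rw [length_subWord]; exact hp)]
  unfold subWord
  rw [List.getElem_ofFn]

lemma getD_le_of_mem {w : List ℕ} {p : ℕ} (hw : ∀ x ∈ w, x ≤ N) : w.getD p 0 ≤ N := by
  by_cases hp : p < w.length
  · rw [List.getD_eq_getElem w 0 hp]; exact hw _ (List.getElem_mem hp)
  · rw [List.getD_eq_default w 0 (by omega)]; exact Nat.zero_le N

lemma addWord_mem_words {τ n : ℕ} {s e : ℕ → ℕ} {i : List ℕ}
    (hi : i ∈ Omega N τ s n) (he : ∀ k, 1 ≤ k → k ≤ τ → e k ≤ s k) (hτn : τ ≤ n) :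
    addWord τ e i ∈ Words N n := by
  have hlen : i.length = n := hi.1.1
  subst hlen
  refine ⟨length_addWord, ?_⟩
  intro a ha
  unfold addWord at ha
  rw [List.mem_ofFn] at ha
  obtain ⟨p, hp⟩ := ha
  change i.getD p 0 + (if i.length - τ ≤ (p : ℕ) then e (i.length - (p : ℕ)) else 0) = a at hp
  by_cases hc : i.length - τ ≤ (p : ℕ)
  · rw [if_pos hc] at hp
    have hk1 : 1 ≤ i.length - (p : ℕ) := by have := p.2; omega
    have hk2 : i.length - (p : ℕ) ≤ τ := by omega
    have hcond := hi.2 (i.length - (p : ℕ)) hk1 hk2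
    have hee := he (i.length - (p : ℕ)) hk1 hk2
    have hgetD : i.length - (i.length - (p : ℕ)) = (p : ℕ) := by have := p.2; omega
    rw [hgetD] at hcond
    omega
  · rw [if_neg hc, add_zero] at hp
    rw [← hp]
    exact words_getD_le hi.1 p.2

lemma subWord_mem_words {τ n : ℕ} {e : ℕ → ℕ} {i : List ℕ}
    (hi : i ∈ Words N n) : subWord τ e i ∈ Words N n := by
  refine ⟨by rw [length_subWord, hi.1], ?_⟩
  intro a ha
  unfold subWord at ha
  rw [List.mem_ofFn] at ha
  obtain ⟨p, hp⟩ := ha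
  change i.getD p 0 - _ = a at hp
  have := words_getD_le hi (p := (p : ℕ)) (by rw [← hi.1]; exact p.2)
  omega

lemma addWord_shift {τ n : ℕ} {e : ℕ → ℕ} {i : List ℕ} (hlen : i.length = n) :
    ∀ p < n, ((addWord τ e i).getD p 0 : ℝ)
      = (i.getD p 0 : ℝ) + 1 * (if n - τ ≤ p then (e (n - p) : ℝ) else 0) := by
  intro p hp
  rw [getD_addWord (by omega), hlen]
  by_cases hc : n - τ ≤ p
  · rw [if_pos hc, if_pos hc]; push_cast; ring
  · rw [if_neg hc, if_neg hc]; push_cast; ring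

lemma subWord_shift {τ n : ℕ} {s e : ℕ → ℕ} {i : List ℕ}
    (hi : i ∈ OmegaHat N τ s n) (he : ∀ k, 1 ≤ k → k ≤ τ → e k ≤ s k) (hτn : τ ≤ n) :
    ∀ p < n, ((subWord τ e i).getD p 0 : ℝ)
      = (i.getD p 0 : ℝ) + (-1) * (if n - τ ≤ p then (e (n - p) : ℝ) else 0) := by
  intro p hp
  have hlen : i.length = n := hi.1.1
  rw [getD_subWord (by omega), hlen]
  by_cases hc : n - τ ≤ p
  · rw [if_pos hc, if_pos hc]
    have hk1 : 1 ≤ n - p := by omega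
    have hk2 : n - p ≤ τ := by omega
    have hcond := hi.2 (n - p) hk1 hk2
    have hgetD : n - (n - p) = p := by omega
    rw [hgetD] at hcond
    have hle : e (n - p) ≤ i.getD p 0 := le_trans (he _ hk1 hk2) hcond
    push_cast [Nat.cast_sub hle]
    ring
  · rw [if_neg hc, if_neg hc, Nat.sub_zero]; push_cast; ring

lemma addWord_append {τ : ℕ} {e : ℕ → ℕ} {u i : List ℕ} (hi : i.length = τ) :
    addWord τ e (u ++ i) = u ++ addWord τ e i := by
  refine List.ext_getElem (by simp [length_addWord]) fun p h1 h2 => ?_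
  rw [← List.getD_eq_getElem _ 0 h1, ← List.getD_eq_getElem _ 0 h2]
  rw [length_addWord] at h1
  rw [getD_addWord h1]
  rw [List.length_append] at h1
  by_cases hc : p < u.length
  · rw [List.getD_append _ _ _ _ hc, List.getD_append _ _ _ _ hc]
    rw [if_neg (by rw [List.length_append, hi]; omega), add_zero]
  · have hcc : u.length ≤ p := by omega
    rw [List.getD_append_right _ _ _ _ hcc, List.getD_append_right _ _ _ _ hcc]
    rw [getD_addWord (by omega)]
    rw [if_pos (by rw [List.length_append, hi]; omega)]
    rw [if_pos (by rw [hi]; omega)]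
    congr 2
    rw [List.length_append, hi]
    omega

lemma subWord_append {τ : ℕ} {e : ℕ → ℕ} {u i : List ℕ} (hi : i.length = τ) :
    subWord τ e (u ++ i) = u ++ subWord τ e i := by
  refine List.ext_getElem (by simp [length_subWord]) fun p h1 h2 => ?_
  rw [← List.getD_eq_getElem _ 0 h1, ← List.getD_eq_getElem _ 0 h2]
  rw [length_subWord] at h1
  rw [getD_subWord h1]
  rw [List.length_append] at h1
  by_cases hc : p < u.length
  · rw [List.getD_append _ _ _ _ hc, List.getD_append _ _ _ _ hc]
    rw [if_neg (by rw [List.length_append, hi]; omega), Nat.sub_zero]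
  · have hcc : u.length ≤ p := by omega
    rw [List.getD_append_right _ _ _ _ hcc, List.getD_append_right _ _ _ _ hcc]
    rw [getD_subWord (by omega)]
    rw [if_pos (by rw [List.length_append, hi]; omega)]
    rw [if_pos (by rw [hi]; omega)]
    congr 2
    rw [List.length_append, hi]
    omega

lemma words_append {a b : ℕ} {u v : List ℕ} (hu : u ∈ Words N a) (hv : v ∈ Words N b) :
    u ++ v ∈ Words N (a + b) := by
  refine ⟨by rw [List.length_append, hu.1, hv.1], ?_⟩
  intro x hx
  rcases List.mem_append.mp hx with h | h
  · exact hu.2 x h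
  · exact hv.2 x h

lemma omega_append {τ a : ℕ} {s : ℕ → ℕ} {u i : List ℕ}
    (hu : u ∈ Words N a) (hi : i ∈ Omega N τ s τ) : u ++ i ∈ Omega N τ s (a + τ) := by
  refine ⟨words_append hu hi.1, ?_⟩
  intro k hk1 hk2
  have hlen : u.length = a := hu.1
  have hilen : i.length = τ := hi.1.1
  rw [List.getD_append_right _ _ _ _ (by omega)]
  have : a + τ - k - u.length = τ - k := by omega
  rw [this]
  exact hi.2 k hk1 hk2

lemma omegaHat_append {τ a : ℕ} {s : ℕ → ℕ} {u i : List ℕ}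
    (hu : u ∈ Words N a) (hi : i ∈ OmegaHat N τ s τ) : u ++ i ∈ OmegaHat N τ s (a + τ) := by
  refine ⟨words_append hu hi.1, ?_⟩
  intro k hk1 hk2
  have hlen : u.length = a := hu.1
  have hilen : i.length = τ := hi.1.1
  rw [List.getD_append_right _ _ _ _ (by omega)]
  have : a + τ - k - u.length = τ - k := by omega
  rw [this]
  exact hi.2 k hk1 hk2

lemma omega_drop {τ n : ℕ} {s : ℕ → ℕ} {i : List ℕ} (hi : i ∈ Omega N τ s n) (hτn : τ ≤ n) :
    i.drop (n - τ) ∈ Omega N τ s τ := by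
  have hlen : i.length = n := hi.1.1
  refine ⟨⟨by rw [List.length_drop, hlen]; omega, fun x hx => hi.1.2 x (List.mem_of_mem_drop hx)⟩, ?_⟩
  intro k hk1 hk2
  have hd : (i.drop (n - τ)).getD (τ - k) 0 = i.getD (n - τ + (τ - k)) 0 := by
    rw [List.getD_eq_getElem _ 0 (by rw [List.length_drop, hlen]; omega),
      List.getD_eq_getElem _ 0 (by rw [hlen]; omega), List.getElem_drop]
  rw [hd]
  have : n - τ + (τ - k) = n - k := by omega
  rw [this]
  exact hi.2 k hk1 hk2

lemma omegaHat_drop {τ n : ℕ} {s : ℕ → ℕ} {i : List ℕ} (hi : i ∈ OmegaHat N τ s n) (hτn : τ ≤ n) :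
    i.drop (n - τ) ∈ OmegaHat N τ s τ := by
  have hlen : i.length = n := hi.1.1
  refine ⟨⟨by rw [List.length_drop, hlen]; omega, fun x hx => hi.1.2 x (List.mem_of_mem_drop hx)⟩, ?_⟩
  intro k hk1 hk2
  have hd : (i.drop (n - τ)).getD (τ - k) 0 = i.getD (n - τ + (τ - k)) 0 := by
    rw [List.getD_eq_getElem _ 0 (by rw [List.length_drop, hlen]; omega),
      List.getD_eq_getElem _ 0 (by rw [hlen]; omega), List.getElem_drop]
  rw [hd]
  have : n - τ + (τ - k) = n - k := by omega
  rw [this]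
  exact hi.2 k hk1 hk2

lemma ofFn_add_eq_addWord {τ : ℕ} {e : ℕ → ℕ} {w : List ℕ} (hw : w.length = τ) :
    (List.ofFn fun idx : Fin τ => w.getD idx 0 + e (τ - (idx : ℕ))) = addWord τ e w := by
  refine List.ext_getElem (by simp [length_addWord, hw]) fun p h1 h2 => ?_
  rw [List.getElem_ofFn]
  rw [← List.getD_eq_getElem _ 0 h2]
  rw [getD_addWord (by rw [hw]; simpa using h1)]
  rw [hw]
  rw [if_pos (by omega)]

lemma ofFn_sub_eq_subWord {τ : ℕ} {e : ℕ → ℕ} {w : List ℕ} (hw : w.length = τ) :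
    (List.ofFn fun idx : Fin τ => w.getD idx 0 - e (τ - (idx : ℕ))) = subWord τ e w := by
  refine List.ext_getElem (by simp [length_subWord, hw]) fun p h1 h2 => ?_
  rw [List.getElem_ofFn]
  rw [← List.getD_eq_getElem _ 0 h2]
  rw [getD_subWord (by rw [hw]; simpa using h1)]
  rw [hw]
  rw [if_pos (by omega)]

lemma mem_Wset_iff {m τ : ℕ} {d : Fin (m + 1) → ℕ → ℕ} {v : List ℕ} :
    v ∈ Wset N τ d ↔
      ((∃ w ∈ Omega N τ (digitSup d) τ, ∃ j : Fin (m + 1), v = addWord τ (d j) w) ∨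
       (∃ w ∈ OmegaHat N τ (digitSup d) τ, ∃ j : Fin (m + 1), v = subWord τ (d j) w)) := by
  constructor
  · rintro (⟨w, hw, j, rfl⟩ | ⟨w, hw, j, rfl⟩)
    · exact Or.inl ⟨w, hw, j, (ofFn_add_eq_addWord hw.1.1).symm ▸ rfl⟩
    · exact Or.inr ⟨w, hw, j, (ofFn_sub_eq_subWord hw.1.1).symm ▸ rfl⟩
  · rintro (⟨w, hw, j, rfl⟩ | ⟨w, hw, j, rfl⟩)
    · exact Or.inl ⟨w, hw, j, (ofFn_add_eq_addWord hw.1.1).symm⟩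
    · exact Or.inr ⟨w, hw, j, (ofFn_sub_eq_subWord hw.1.1).symm⟩

lemma words_take {ℓ n : ℕ} {y : List ℕ} (hy : y ∈ Words N ℓ) (hn : n ≤ ℓ) :
    y.take n ∈ Words N n := by
  refine ⟨by rw [List.length_take, hy.1]; omega, fun x hx => hy.2 x (List.mem_of_mem_take hx)⟩

lemma words_drop {ℓ n : ℕ} {y : List ℕ} (hy : y ∈ Words N ℓ) :
    y.drop n ∈ Words N (ℓ - n) := by
  refine ⟨by rw [List.length_drop, hy.1], fun x hx => hy.2 x (List.mem_of_mem_drop hx)⟩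


end AuxLemmas

/-- Suppose `0 < β < 1/(N+1)`. A vector `t = (t_0,…,t_m)` with `0 = t_0 < ⋯ < t_m` is an
admissible translation vector iff `t ∈ T^{m+1}` and there are finite sets of words
`I_1 ⊆ ⋃_{n ≥ τ_t} Ω_t^n` and `I_2 ⊆ ⋃_{n ≥ τ_t} Ω̂_t^n` such that
`⋃_{i ∈ I_1} φ_i(Γ_t) ∪ ⋃_{i ∈ I_2} φ_i(1 - Γ_t) = Γ`. -/
theorem stmt15 (N : ℕ) (hN : 0 < N) (β : ℝ) (hβ0 : 0 < β) (hβ1 : β < 1 / (N + 1))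
    (m : ℕ) (t : Fin (m + 1) → ℝ) (ht0 : t 0 = 0) (hmono : StrictMono t) :
    IsAdmissible N β t ↔
      (∀ j, t j ∈ Tset N β) ∧
        ∃ τ d, IsMinimalRep N β t τ d ∧
          ∃ I1 I2 : Finset (List ℕ),
            (∀ w ∈ I1, ∃ n, τ ≤ n ∧ w ∈ Omega N τ (digitSup d) n) ∧
            (∀ w ∈ I2, ∃ n, τ ≤ n ∧ w ∈ OmegaHat N τ (digitSup d) n) ∧
            (⋃ w ∈ I1, phiWord N β w '' GammaT N β t) ∪
              (⋃ w ∈ I2, (fun x => phiWord N β w (1 - x)) '' GammaT N β t) = Gamma N β := by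
  classical
  have hNR : (0 : ℝ) < N := by exact_mod_cast hN
  have hbig : β * ((N : ℝ) + 1) < 1 := by
    rw [lt_div_iff₀ (by positivity)] at hβ1
    linarith
  have hNN : (0 : ℝ) ≤ N := le_of_lt hNR
  have hb1 : β < 1 := by nlinarith
  constructor
  · rintro ⟨hT, τ, d, hrep, hadm⟩
    refine ⟨hT, τ, d, hrep, ?_⟩
    obtain ⟨ℓ, hτℓ, hcov⟩ := hadm
    have htj := hrep.1.2
    have he : ∀ j : Fin (m + 1), ∀ k, 1 ≤ k → k ≤ τ → d j k ≤ digitSup d k :=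
      fun j k _ _ => Finset.le_sup (f := fun j => d j k) (Finset.mem_univ j)
    refine ⟨(Finset.Icc τ ℓ).biUnion fun n =>
        (allWords N n).filter fun w => w ∈ Omega N τ (digitSup d) n,
      (Finset.Icc τ ℓ).biUnion fun n =>
        (allWords N n).filter fun w => w ∈ OmegaHat N τ (digitSup d) n, ?_, ?_, ?_⟩
    · intro w hw
      obtain ⟨n, hn, hw2⟩ := Finset.mem_biUnion.mp hw
      exact ⟨n, (Finset.mem_Icc.mp hn).1, (Finset.mem_filter.mp hw2).2⟩
    · intro w hw
      obtain ⟨n, hn, hw2⟩ := Finset.mem_biUnion.mp hw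
      exact ⟨n, (Finset.mem_Icc.mp hn).1, (Finset.mem_filter.mp hw2).2⟩
    · apply Set.Subset.antisymm
      · intro x hx
        rcases hx with hx | hx
        · rw [Set.mem_iUnion₂] at hx
          obtain ⟨i, hiI, y0, hy0, hxeq⟩ := hx
          obtain ⟨n, hn, hifil⟩ := Finset.mem_biUnion.mp hiI
          obtain ⟨hτn, hnℓ⟩ := Finset.mem_Icc.mp hn
          have hiΩ : i ∈ Omega N τ (digitSup d) n := (Finset.mem_filter.mp hifil).2
          rw [GammaT, Set.mem_iUnion] at hy0
          obtain ⟨j, g, hg, hg2⟩ := hy0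
          have hilen : i.length = n := hiΩ.1.1
          have hshift := phiWord_shift (β := β) hN hβ0 hτn
            (z := addWord τ (d j) i) (I := i)
            (by rw [length_addWord, hilen]) hilen (d j) 1 (addWord_shift hilen) g
          rw [one_mul, ← htj j] at hshift
          have : x = phiWord N β (addWord τ (d j) i) g := by
            rw [← hxeq, ← hg2, ← hshift]
          rw [this]
          exact gamma_phiWord hβ0.le hb1 (addWord_mem_words hiΩ (he j) hτn) hg
        · rw [Set.mem_iUnion₂] at hx
          obtain ⟨i, hiI, y0, hy0, hxeq⟩ := hx
          obtain ⟨n, hn, hifil⟩ := Finset.mem_biUnion.mp hiI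
          obtain ⟨hτn, hnℓ⟩ := Finset.mem_Icc.mp hn
          have hiΩ : i ∈ OmegaHat N τ (digitSup d) n := (Finset.mem_filter.mp hifil).2
          rw [GammaT, Set.mem_iUnion] at hy0
          obtain ⟨j, g, hg, hg2⟩ := hy0
          have hilen : i.length = n := hiΩ.1.1
          have hshift := phiWord_shift (β := β) hN hβ0 hτn
            (z := subWord τ (d j) i) (I := i)
            (by rw [length_subWord, hilen]) hilen (d j) (-1)
            (subWord_shift hiΩ (he j) hτn) (1 - g)
          rw [← htj j] at hshift
          have : x = phiWord N β (subWord τ (d j) i) (1 - g) := by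
            rw [← hxeq, ← hg2]
            rw [← hshift]
            congr 1
            ring
          rw [this]
          exact gamma_phiWord hβ0.le hb1 (subWord_mem_words hiΩ.1)
            (gamma_one_sub hN hβ0.le hb1 hg)
      · intro x hx
        obtain ⟨y, g, hy, hg, rfl⟩ := gamma_split hN hβ0.le hb1 hx ℓ
        have hy2 : y ∈ ⋃ n ∈ Finset.Icc τ ℓ,
            { z : List ℕ | ∃ u ∈ Words N (n - τ), ∃ w ∈ Wset N τ d,
                ∃ v ∈ Words N (ℓ - n), z = u ++ w ++ v } := by
          rw [hcov]; exact hy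
        rw [Set.mem_iUnion₂] at hy2
        obtain ⟨n, hn, u, hu, w, hw, v, hv, rfl⟩ := hy2
        obtain ⟨hτn, hnℓ⟩ := Finset.mem_Icc.mp hn
        have hulen : u.length = n - τ := hu.1
        rw [mem_Wset_iff] at hw
        have hgv : phiWord N β v g ∈ Gamma N β := gamma_phiWord hβ0.le hb1 hv hg
        rcases hw with ⟨w0, hw0, j, rfl⟩ | ⟨w0, hw0, j, rfl⟩
        · have hw0len : w0.length = τ := hw0.1.1
          have hI : u ++ w0 ∈ Omega N τ (digitSup d) n := by
            have h2 := omega_append hu hw0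
            rwa [show n - τ + τ = n by omega] at h2
          have hIlen : (u ++ w0).length = n := hI.1.1
          have hshift := phiWord_shift (β := β) hN hβ0 hτn
            (z := addWord τ (d j) (u ++ w0)) (I := u ++ w0)
            (by rw [length_addWord, hIlen]) hIlen (d j) 1 (addWord_shift hIlen)
            (phiWord N β v g)
          rw [one_mul, ← htj j] at hshift
          apply Set.mem_union_left
          rw [Set.mem_iUnion₂]
          refine ⟨u ++ w0,
            Finset.mem_biUnion.mpr ⟨n, hn, Finset.mem_filter.mpr
              ⟨mem_allWords.mpr hI.1, hI⟩⟩,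
            phiWord N β v g + t j, ?_, ?_⟩
          · rw [GammaT, Set.mem_iUnion]
            exact ⟨j, phiWord N β v g, hgv, rfl⟩
          · calc phiWord N β (u ++ w0) (phiWord N β v g + t j)
                = phiWord N β (addWord τ (d j) (u ++ w0)) (phiWord N β v g) := hshift
              _ = phiWord N β (u ++ addWord τ (d j) w0) (phiWord N β v g) := by
                  rw [addWord_append hw0len]
              _ = phiWord N β ((u ++ addWord τ (d j) w0) ++ v) g :=
                  (phiWord_append N β _ v g).symm
              _ = phiWord N β (u ++ addWord τ (d j) w0 ++ v) g := by
                  rw [List.append_assoc]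
        · have hw0len : w0.length = τ := hw0.1.1
          have hI : u ++ w0 ∈ OmegaHat N τ (digitSup d) n := by
            have h2 := omegaHat_append hu hw0
            rwa [show n - τ + τ = n by omega] at h2
          have hIlen : (u ++ w0).length = n := hI.1.1
          have hshift := phiWord_shift (β := β) hN hβ0 hτn
            (z := subWord τ (d j) (u ++ w0)) (I := u ++ w0)
            (by rw [length_subWord, hIlen]) hIlen (d j) (-1)
            (subWord_shift hI (he j) hτn) (phiWord N β v g)
          rw [← htj j] at hshift
          apply Set.mem_union_right
          rw [Set.mem_iUnion₂]
          refine ⟨u ++ w0,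
            Finset.mem_biUnion.mpr ⟨n, hn, Finset.mem_filter.mpr
              ⟨mem_allWords.mpr hI.1, hI⟩⟩,
            (1 - phiWord N β v g) + t j, ?_, ?_⟩
          · rw [GammaT, Set.mem_iUnion]
            exact ⟨j, 1 - phiWord N β v g, gamma_one_sub hN hβ0.le hb1 hgv, rfl⟩
          · calc phiWord N β (u ++ w0) (1 - ((1 - phiWord N β v g) + t j))
                = phiWord N β (u ++ w0) (phiWord N β v g + (-1) * t j) := by
                  congr 1; ring
              _ = phiWord N β (subWord τ (d j) (u ++ w0)) (phiWord N β v g) := hshift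
              _ = phiWord N β (u ++ subWord τ (d j) w0) (phiWord N β v g) := by
                  rw [subWord_append hw0len]
              _ = phiWord N β ((u ++ subWord τ (d j) w0) ++ v) g :=
                  (phiWord_append N β _ v g).symm
              _ = phiWord N β (u ++ subWord τ (d j) w0 ++ v) g := by
                  rw [List.append_assoc]
  · rintro ⟨hT, τ, d, hrep, I1, I2, hI1, hI2, hcov⟩
    refine ⟨hT, τ, d, hrep, ?_⟩
    have htj := hrep.1.2
    have he : ∀ j : Fin (m + 1), ∀ k, 1 ≤ k → k ≤ τ → d j k ≤ digitSup d k :=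
      fun j k _ _ => Finset.le_sup (f := fun j => d j k) (Finset.mem_univ j)
    refine ⟨max ((I1 ∪ I2).sup List.length) τ, le_max_right _ _, ?_⟩
    set ℓ := max ((I1 ∪ I2).sup List.length) τ with hℓ
    apply Set.Subset.antisymm
    · intro z hz
      rw [Set.mem_iUnion₂] at hz
      obtain ⟨n, hn, u, hu, w, hw, v, hv, rfl⟩ := hz
      obtain ⟨hτn, hnℓ⟩ := Finset.mem_Icc.mp hn
      have hwW : w ∈ Words N τ := by
        rw [mem_Wset_iff] at hw
        rcases hw with ⟨w0, hw0, j, rfl⟩ | ⟨w0, hw0, j, rfl⟩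
        · exact addWord_mem_words hw0 (he j) le_rfl
        · exact subWord_mem_words hw0.1
      have h2 := words_append hu (words_append hwW hv)
      rwa [show n - τ + (τ + (ℓ - n)) = ℓ by omega, ← List.append_assoc] at h2
    · intro y hy
      have hx : phiWord N β y 0 ∈ Gamma N β := gamma_phiWord hβ0.le hb1 hy zero_mem_gamma
      rw [← hcov] at hx
      rcases hx with hx | hx
      · rw [Set.mem_iUnion₂] at hx
        obtain ⟨i, hiI, y0, hy0, hxeq⟩ := hx
        obtain ⟨n, hτn, hiΩ⟩ := hI1 i hiI
        have hilen : i.length = n := hiΩ.1.1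
        have hnℓ : n ≤ ℓ := by
          have h1 : i.length ≤ (I1 ∪ I2).sup List.length :=
            Finset.le_sup (Finset.mem_union_left I2 hiI)
          rw [hilen] at h1
          exact le_trans h1 (le_max_left _ _)
        rw [GammaT, Set.mem_iUnion] at hy0
        obtain ⟨j, g, hg, hg2⟩ := hy0
        have hshift := phiWord_shift (β := β) hN hβ0 hτn
          (z := addWord τ (d j) i) (I := i)
          (by rw [length_addWord, hilen]) hilen (d j) 1 (addWord_shift hilen) g
        rw [one_mul, ← htj j] at hshift
        have hzW : addWord τ (d j) i ∈ Words N n := addWord_mem_words hiΩ (he j) hτn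
        have heq : phiWord N β y 0 = phiWord N β (addWord τ (d j) i) g := by
          rw [← hxeq, ← hg2, ← hshift]
        have hpref := prefix_digits_eq hN hβ0 hbig hnℓ hy hzW hg zero_mem_gamma heq
        have hztake : addWord τ (d j) i = y.take n := by
          refine List.ext_getElem ?_ fun p h1 h2 => ?_
          · rw [length_addWord, hilen, List.length_take, hy.1]; omega
          · have hp : p < n := by rwa [length_addWord, hilen] at h1
            have h3 := hpref p hp
            rw [← List.getD_eq_getElem _ 0 h1, ← List.getD_eq_getElem _ 0 h2, h3]
            rw [List.getD_eq_getElem _ 0 h2,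
              List.getD_eq_getElem y 0 (by rw [hy.1]; omega)]
            exact List.getElem_take.symm
        have hzsplit : addWord τ (d j) i
            = i.take (n - τ) ++ addWord τ (d j) (i.drop (n - τ)) := by
          conv_lhs => rw [← List.take_append_drop (n - τ) i]
          exact addWord_append (by rw [List.length_drop, hilen]; omega)
        rw [Set.mem_iUnion₂]
        refine ⟨n, Finset.mem_Icc.mpr ⟨hτn, hnℓ⟩,
          i.take (n - τ), words_take hiΩ.1 (by omega),
          addWord τ (d j) (i.drop (n - τ)),
          mem_Wset_iff.mpr (Or.inl ⟨i.drop (n - τ), omega_drop hiΩ hτn, j, rfl⟩),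
          y.drop n, words_drop hy, ?_⟩
        conv_lhs => rw [← List.take_append_drop n y]
        rw [← hztake, hzsplit, List.append_assoc]
      · rw [Set.mem_iUnion₂] at hx
        obtain ⟨i, hiI, y0, hy0, hxeq⟩ := hx
        obtain ⟨n, hτn, hiΩ⟩ := hI2 i hiI
        have hilen : i.length = n := hiΩ.1.1
        have hnℓ : n ≤ ℓ := by
          have h1 : i.length ≤ (I1 ∪ I2).sup List.length :=
            Finset.le_sup (Finset.mem_union_right I1 hiI)
          rw [hilen] at h1
          exact le_trans h1 (le_max_left _ _)
        rw [GammaT, Set.mem_iUnion] at hy0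
        obtain ⟨j, g, hg, hg2⟩ := hy0
        have hshift := phiWord_shift (β := β) hN hβ0 hτn
          (z := subWord τ (d j) i) (I := i)
          (by rw [length_subWord, hilen]) hilen (d j) (-1)
          (subWord_shift hiΩ (he j) hτn) (1 - g)
        rw [← htj j] at hshift
        have hzW : subWord τ (d j) i ∈ Words N n := subWord_mem_words hiΩ.1
        have heq : phiWord N β y 0 = phiWord N β (subWord τ (d j) i) (1 - g) := by
          rw [← hxeq, ← hg2, ← hshift]
          congr 1
          ring
        have hpref := prefix_digits_eq hN hβ0 hbig hnℓ hy hzW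
          (gamma_one_sub hN hβ0.le hb1 hg) zero_mem_gamma heq
        have hztake : subWord τ (d j) i = y.take n := by
          refine List.ext_getElem ?_ fun p h1 h2 => ?_
          · rw [length_subWord, hilen, List.length_take, hy.1]; omega
          · have hp : p < n := by rwa [length_subWord, hilen] at h1
            have h3 := hpref p hp
            rw [← List.getD_eq_getElem _ 0 h1, ← List.getD_eq_getElem _ 0 h2, h3]
            rw [List.getD_eq_getElem _ 0 h2,
              List.getD_eq_getElem y 0 (by rw [hy.1]; omega)]
            exact List.getElem_take.symm
        have hzsplit : subWord τ (d j) i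
            = i.take (n - τ) ++ subWord τ (d j) (i.drop (n - τ)) := by
          conv_lhs => rw [← List.take_append_drop (n - τ) i]
          exact subWord_append (by rw [List.length_drop, hilen]; omega)
        rw [Set.mem_iUnion₂]
        refine ⟨n, Finset.mem_Icc.mpr ⟨hτn, hnℓ⟩,
          i.take (n - τ), words_take hiΩ.1 (by omega),
          subWord τ (d j) (i.drop (n - τ)),
          mem_Wset_iff.mpr (Or.inr ⟨i.drop (n - τ), omegaHat_drop hiΩ hτn, j, rfl⟩),
          y.drop n, words_drop hy, ?_⟩
        conv_lhs => rw [← List.take_append_drop n y]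
        rw [← hztake, hzsplit, List.append_assoc]

end HSCantor
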